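/- arXiv:1305.4293 — 2 statements merged into one kernel-verified Lean document; each statement's English description precedes it below -/
import Mathlib

section
/- For natural numbers k < m, every continuous map from the k-sphere S^k to the m-sphere S^m is null-homotopic, i.e., homotopic to a constant map. -/
/-!
Approximate `f`, viewed as a map into `ℝ^{m+1}`, within distance `1` by a locally Lipschitz map
`G` (Stone–Weierstrass for the algebra of locally Lipschitz functions). Then `G` never vanishes,
and its normalization is homotopic to `f` through the normalized straight-line homotopy, since it
is never antipodal to `f`. Locally Lipschitz maps and normalization do not increase Hausdorff
dimension, so the normalized map has image of dimension at most `dimH S^k = k < m = dimH S^m`.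
It therefore misses a point `p`, and a sphere map missing `p` is homotopic to the constant `-p`.
-/

open Set Metric Module
open scoped ENNReal

section SphereDimension

variable {E : Type*} [NormedAddCommGroup E] [InnerProductSpace ℝ E] [FiniteDimensional ℝ E]

theorem dimH_sphere_le {n : ℕ} (hn : finrank ℝ E = n + 1) : dimH (sphere (0 : E) 1) ≤ n := by
  have : Fact (finrank ℝ E = n + 1) := ⟨hn⟩
  have : Nontrivial E := Module.nontrivial_of_finrank_eq_succ hn
  obtain ⟨v, hv⟩ := exists_norm_eq E zero_le_one
  have hv0 : v ≠ 0 := by rintro rfl; simp at hv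
  -- stereographic projection from `v` parametrizes the rest of the sphere smoothly
  have hcover :
      sphere (0 : E) 1 ⊆ insert v (range (stereoInvFunAux v ∘ ((↑) : (ℝ ∙ v)ᗮ → E))) := by
    intro x hx
    rcases eq_or_ne x v with rfl | hxv
    · exact mem_insert _ _
    · exact Or.inr ⟨stereoToFun v x,
        congrArg Subtype.val (stereo_left_inv hv (x := ⟨x, hx⟩) hxv)⟩
  calc dimH (sphere (0 : E) 1)
      ≤ dimH (insert v (range (stereoInvFunAux v ∘ ((↑) : (ℝ ∙ v)ᗮ → E)))) := dimH_mono hcover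
    _ = dimH (range (stereoInvFunAux v ∘ ((↑) : (ℝ ∙ v)ᗮ → E))) := by
        rw [insert_eq, dimH_union, dimH_singleton, zero_max]
    _ ≤ finrank ℝ (ℝ ∙ v)ᗮ :=
        (contDiff_stereoInvFunAux.comp (ℝ ∙ v)ᗮ.subtypeL.contDiff).dimH_range_le
    _ = n := by rw [Submodule.finrank_orthogonal_span_singleton (n := n) hv0]

theorem le_dimH_sphere {n : ℕ} (hn : finrank ℝ E = n + 1) :
    (n : ℝ≥0∞) ≤ dimH (sphere (0 : E) 1) := by
  have : Fact (finrank ℝ E = n + 1) := ⟨hn⟩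
  have : Nontrivial E := Module.nontrivial_of_finrank_eq_succ hn
  obtain ⟨v, hv⟩ := exists_norm_eq E zero_le_one
  have hv0 : v ≠ 0 := by rintro rfl; simp at hv
  set K := (ℝ ∙ v)ᗮ
  -- the orthogonal projection maps the upper hemisphere onto the unit ball of `K`
  have hball : ball (0 : K) 1 ⊆ K.orthogonalProjectionOnto '' sphere (0 : E) 1 := by
    intro w hw
    have hw1 : ‖(w : E)‖ ^ 2 ≤ 1 := by
      have : ‖(w : E)‖ < 1 := by simpa using hw
      nlinarith [norm_nonneg (w : E)]
    refine ⟨w + √(1 - ‖(w : E)‖ ^ 2) • v, ?_, ?_⟩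
    · have horth : inner ℝ (w : E) (√(1 - ‖(w : E)‖ ^ 2) • v) = 0 := by
        rw [inner_smul_right, Submodule.mem_orthogonal_singleton_iff_inner_left.mp w.2, mul_zero]
      have := norm_add_sq_eq_norm_sq_add_norm_sq_of_inner_eq_zero _ _ horth
      rw [norm_smul, hv, Real.norm_of_nonneg (Real.sqrt_nonneg _), mul_one,
        Real.mul_self_sqrt (by linarith)] at this
      rw [mem_sphere_zero_iff_norm]
      nlinarith [norm_nonneg ((w : E) + √(1 - ‖(w : E)‖ ^ 2) • v)]
    · simp [K, Submodule.orthogonalProjectionOnto_orthogonalComplement_singleton_eq_zero]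
  calc (n : ℝ≥0∞) = dimH (ball (0 : K) 1) := by
        rw [Real.dimH_of_mem_nhds (ball_mem_nhds 0 one_pos),
          Submodule.finrank_orthogonal_span_singleton (n := n) hv0]
    _ ≤ dimH (K.orthogonalProjectionOnto '' sphere (0 : E) 1) := dimH_mono hball
    _ ≤ dimH (sphere (0 : E) 1) := dimH_orthogonalProjectionOnto_le K _

end SphereDimension

section LipschitzApproximation

def locallyLipschitzSubalgebra (X : Type*) [PseudoMetricSpace X] : Subalgebra ℝ C(X, ℝ) where
  carrier := {f | LocallyLipschitz f}
  mul_mem' hf hg := (contDiff_mul (𝕜 := ℝ) (n := 1)).locallyLipschitz.comp (hf.prodMk hg)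
  add_mem' hf hg := hf.add hg
  algebraMap_mem' r := LocallyLipschitz.const r

theorem locallyLipschitzSubalgebra_separatesPoints {X : Type*} [MetricSpace X] :
    (locallyLipschitzSubalgebra X).SeparatesPoints := by
  intro x y hxy
  refine ⟨fun z => dist z y, ⟨⟨fun z => dist z y, by fun_prop⟩,
    (LipschitzWith.dist_left y).locallyLipschitz, rfl⟩, ?_⟩
  simpa using hxy

theorem exists_locallyLipschitz_dist_lt {X V : Type*} [MetricSpace X] [CompactSpace X]
    [NormedAddCommGroup V] [NormedSpace ℝ V] [FiniteDimensional ℝ V] (F : C(X, V)) {ε : ℝ}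
    (hε : 0 < ε) : ∃ G : X → V, LocallyLipschitz G ∧ ∀ x, dist (G x) (F x) < ε := by
  let b := Module.finBasis ℝ V
  set C := ∑ i, ‖b i‖ + 1
  have hC : 0 < C := by positivity
  have hcoord : ∀ i, ∃ g : X → ℝ, LocallyLipschitz g ∧ ∀ x, ‖g x - b.coord i (F x)‖ < ε / C := by
    intro i
    obtain ⟨⟨g, hg⟩, hgF⟩ :=
      ContinuousMap.exists_mem_subalgebra_near_continuous_of_separatesPoints _
        locallyLipschitzSubalgebra_separatesPoints (fun x => b.coord i (F x))
        ((b.coord i).continuous_of_finiteDimensional.comp F.continuous) _ (div_pos hε hC)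
    exact ⟨g, hg, hgF⟩
  choose g hg hgF using hcoord
  refine ⟨fun x => ∑ i, g i x • b i, ?_, fun x => ?_⟩
  · have : LocallyLipschitz (∑ i, fun x => g i x • b i) :=
      Finset.sum_induction _ LocallyLipschitz (fun _ _ => LocallyLipschitz.add)
        (LocallyLipschitz.const 0) fun i _ =>
          (contDiff_id.smul contDiff_const :
            ContDiff ℝ 1 fun r : ℝ => r • b i).locallyLipschitz.comp (hg i)
    simpa [Finset.sum_fn] using this
  · calc dist (∑ i, g i x • b i) (F x) = ‖∑ i, (g i x - b.coord i (F x)) • b i‖ := by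
          rw [dist_eq_norm]
          nth_rw 2 [← b.sum_repr (F x)]
          simp [sub_smul]
      _ ≤ ∑ i, ε / C * ‖b i‖ := by
          refine norm_sum_le_of_le _ fun i _ => ?_
          rw [norm_smul]
          exact mul_le_mul_of_nonneg_right (hgF i x).le (norm_nonneg _)
      _ < ε := by
          rw [← Finset.mul_sum, div_mul_eq_mul_div, div_lt_iff₀ hC]
          gcongr
          exact lt_add_one _

end LipschitzApproximation

section Normalize

variable {F : Type*} [NormedAddCommGroup F] [InnerProductSpace ℝ F]

theorem contDiffAt_normalize {n : WithTop ℕ∞} {y : F} (hy : y ≠ 0) :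
    ContDiffAt ℝ n NormedSpace.normalize y :=
  ((contDiffAt_norm ℝ hy).inv (norm_ne_zero_iff.2 hy)).smul contDiffAt_id

theorem dimH_image_normalize_le [SecondCountableTopology F] {s : Set F} (hs : (0 : F) ∉ s) :
    dimH (NormedSpace.normalize '' s) ≤ dimH s :=
  dimH_image_le_of_locally_lipschitzOn fun _ hy =>
    have ⟨K, t, ht, hK⟩ :=
      (contDiffAt_normalize (n := 1) (ne_of_mem_of_not_mem hy hs)).exists_lipschitzOnWith
    ⟨K, t, nhdsWithin_le_nhds ht, hK⟩

end Normalize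

theorem smul_add_smul_ne_zero_of_ne_neg {F : Type*} [NormedAddCommGroup F] [NormedSpace ℝ F]
    {a b : F} (ha : ‖a‖ = 1) (hb : ‖b‖ = 1) (hab : a ≠ -b) {t : ℝ} (ht₀ : 0 ≤ t) (ht₁ : t ≤ 1) :
    (1 - t) • a + t • b ≠ 0 := by
  intro h
  have hab' : (1 - t) • a = -(t • b) := eq_neg_of_add_eq_zero_left h
  have ht : 1 - t = t := by
    simpa [norm_smul, ha, hb, abs_of_nonneg ht₀, abs_of_nonneg (sub_nonneg.2 ht₁)]
      using congrArg norm hab'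
  exact hab (smul_right_injective F (by linarith : 1 - t ≠ 0)
    (hab'.trans (by simp only [smul_neg, ht])))

namespace ContinuousMap

variable {X F : Type*} [TopologicalSpace X] [NormedAddCommGroup F] [NormedSpace ℝ F]

noncomputable def normalize (G : C(X, F)) (hG : ∀ x, G x ≠ 0) : C(X, sphere (0 : F) 1) where
  toFun x := ⟨NormedSpace.normalize (G x),
    by simpa using NormedSpace.norm_normalize_eq_one_iff.2 (hG x)⟩
  continuous_toFun := by
    refine Continuous.subtype_mk ?_ _
    exact (G.continuous.norm.inv₀ fun x => norm_ne_zero_iff.2 (hG x)).smul G.continuous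

theorem homotopic_of_forall_ne_neg (f₀ f₁ : C(X, sphere (0 : F) 1)) (h : ∀ x, f₀ x ≠ -f₁ x) :
    f₀.Homotopic f₁ := by
  let H : C(unitInterval × X, F) :=
    ⟨fun p => (1 - (p.1 : ℝ)) • (f₀ p.2 : F) + (p.1 : ℝ) • (f₁ p.2 : F), by fun_prop⟩
  have hH : ∀ p, H p ≠ 0 := fun p =>
    smul_add_smul_ne_zero_of_ne_neg (by simp) (by simp)
      (fun he => h p.2 (Subtype.ext (by simpa using he))) p.1.2.1 p.1.2.2
  exact ⟨{ toContinuousMap := H.normalize hH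
           map_zero_left x := by
             ext; simp [H, normalize, NormedSpace.normalize_eq_self_of_norm_eq_one]
           map_one_left x := by
             ext; simp [H, normalize, NormedSpace.normalize_eq_self_of_norm_eq_one] }⟩

theorem nullhomotopic_of_forall_ne (f : C(X, sphere (0 : F) 1)) (p : sphere (0 : F) 1)
    (hp : ∀ x, f x ≠ p) : f.Nullhomotopic :=
  ⟨-p, f.homotopic_of_forall_ne_neg (const X (-p)) (by simpa using hp)⟩

end ContinuousMap

theorem exists_homotopic_dimH_range_le {X F : Type*} [MetricSpace X] [CompactSpace X]
    [NormedAddCommGroup F] [InnerProductSpace ℝ F] [FiniteDimensional ℝ F]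
    (f : C(X, sphere (0 : F) 1)) :
    ∃ g : C(X, sphere (0 : F) 1),
      f.Homotopic g ∧ dimH (range fun x => (g x : F)) ≤ dimH (univ : Set X) := by
  obtain ⟨G, hG, hGf⟩ := exists_locallyLipschitz_dist_lt
    (⟨fun x => (f x : F), by fun_prop⟩ : C(X, F)) one_pos
  have hG0 : ∀ x, G x ≠ 0 := fun x h0 => by simpa [h0] using hGf x
  refine ⟨(⟨G, hG.continuous⟩ : C(X, F)).normalize hG0,
    f.homotopic_of_forall_ne_neg _ fun x hx => (hGf x).not_ge ?_, ?_⟩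
  · -- `G x` would point away from `f x`, at distance `‖G x‖ + 1` from it
    have hfx : (f x : F) = -NormedSpace.normalize (G x) := congrArg Subtype.val hx
    have : G x - f x = (‖G x‖ + 1) • NormedSpace.normalize (G x) := by
      rw [hfx, sub_neg_eq_add, add_smul, one_smul, NormedSpace.norm_smul_normalize]
    simp [dist_eq_norm, this, norm_smul, NormedSpace.norm_normalize_eq_one_iff.2 (hG0 x)]
    exact (le_add_of_nonneg_left (norm_nonneg _)).trans (le_abs_self _)
  · calc dimH (range fun x => ((⟨G, hG.continuous⟩ : C(X, F)).normalize hG0 x : F))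
        = dimH (NormedSpace.normalize '' range G) := by rw [← range_comp]; rfl
      _ ≤ dimH (range G) := dimH_image_normalize_le fun ⟨x, hx⟩ => hG0 x hx
      _ ≤ dimH (univ : Set X) := dimH_range_le_of_locally_lipschitzOn hG

/-- For `k < m`, every continuous map from the sphere `S^k` to the sphere `S^m`
is null-homotopic. -/
theorem nullhomotopic_of_sphere_map_to_higher_sphere
    (k m : ℕ) (hkm : k < m)
    (f : C(Metric.sphere (0 : EuclideanSpace ℝ (Fin (k + 1))) 1,
          Metric.sphere (0 : EuclideanSpace ℝ (Fin (m + 1))) 1)) :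
    f.Nullhomotopic := by
  obtain ⟨g, hfg, hg⟩ := exists_homotopic_dimH_range_le f
  obtain ⟨p, hp⟩ : ∃ p, ∀ x, g x ≠ p := by
    by_contra! hsurj
    have hrange : (range fun x => (g x : EuclideanSpace ℝ (Fin (m + 1)))) = sphere 0 1 := by
      rw [show (fun x => (g x : EuclideanSpace ℝ (Fin (m + 1)))) = Subtype.val ∘ g from rfl,
        range_comp, Function.Surjective.range_eq hsurj, image_univ, Subtype.range_coe]
    have : (m : ℝ≥0∞) ≤ k :=
      calc (m : ℝ≥0∞) ≤ dimH (sphere (0 : EuclideanSpace ℝ (Fin (m + 1))) 1) :=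
            le_dimH_sphere finrank_euclideanSpace_fin
        _ ≤ dimH (univ : Set (sphere (0 : EuclideanSpace ℝ (Fin (k + 1))) 1)) := hrange ▸ hg
        _ = dimH (sphere (0 : EuclideanSpace ℝ (Fin (k + 1))) 1) := by
            rw [← isometry_subtype_coe.dimH_image, image_univ, Subtype.range_coe]
        _ ≤ k := dimH_sphere_le finrank_euclideanSpace_fin
    exact hkm.not_ge (by exact_mod_cast this)
  obtain ⟨y, hy⟩ := g.nullhomotopic_of_forall_ne p hp
  exact ⟨y, hfg.trans hy⟩
end

section
/- The unit sphere of an infinite-dimensional complex Hilbert space (for instance the unit sphere of ℓ²(ℕ, ℂ)) is a contractible topological space. -/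
/-!
Pick a Hilbert basis `b` of `E`; its index set `ι` is infinite, so `ι ≃ ℕ × ι` and the shift
`(n, i) ↦ (n + 1, i)` gives an injection `g : ι → ι` without periodic points that misses some
index `j`. The isometry `S : b i ↦ b (g i)` then has no eigenvectors and `b j` is not in its
range. So on the unit sphere `x` and `S x` are never antipodal, nor are `S x` and `b j`, and
normalized straight-line homotopies join the identity to `S` and `S` to the constant `b j`.
-/

open Metric Function
open scoped InnerProductSpace

section NonAntipodal

variable {X F : Type*} [TopologicalSpace X] [NormedAddCommGroup F] [NormedSpace ℝ F]

lemma one_sub_smul_add_smul_ne_zero_of_ne_neg {x y : F} (hxy : ‖x‖ = ‖y‖) (hne : y ≠ -x)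
    {t : ℝ} (ht₀ : 0 ≤ t) (ht₁ : t ≤ 1) : (1 - t) • x + t • y ≠ 0 := by
  intro h
  have hx : x ≠ 0 := by
    rintro rfl
    exact hne (by simpa using hxy.symm)
  have hnorm : (1 - t) * ‖x‖ = t * ‖x‖ := by
    have := congrArg norm (eq_neg_of_add_eq_zero_left h)
    rwa [norm_neg, norm_smul, norm_smul, Real.norm_of_nonneg (by linarith),
      Real.norm_of_nonneg ht₀, ← hxy] at this
  have ht : t = 1 / 2 := by
    have := mul_right_cancel₀ (norm_ne_zero_iff.mpr hx) hnorm
    linarith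
  subst ht
  refine hne (eq_neg_of_add_eq_zero_right ?_)
  have : (1 / 2 : ℝ) • (x + y) = 0 := by
    rw [smul_add]; norm_num at h ⊢; exact h
  exact (smul_eq_zero.mp this).resolve_left (by norm_num)

lemma homotopic_of_forall_ne_neg (f g : C(X, sphere (0 : F) 1)) (h : ∀ x, (g x : F) ≠ -f x) :
    f.Homotopic g := by
  set u : unitInterval × X → F := fun p => (1 - (p.1 : ℝ)) • (f p.2 : F) + (p.1 : ℝ) • (g p.2 : F)
  have hu_cont : Continuous u := by fun_prop
  have hu : ∀ p, u p ≠ 0 := fun p =>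
    one_sub_smul_add_smul_ne_zero_of_ne_neg (by simp) (h p.2) p.1.2.1 p.1.2.2
  refine ⟨{
    toFun := fun p => ⟨‖u p‖⁻¹ • u p, by simpa using norm_smul_inv_norm (𝕜 := ℝ) (hu p)⟩
    continuous_toFun := by
      apply Continuous.subtype_mk
      exact (hu_cont.norm.inv₀ fun p => norm_ne_zero_iff.mpr (hu p)).smul hu_cont
    map_zero_left := fun x => by ext; simp [u]
    map_one_left := fun x => by ext; simp [u] }⟩

end NonAntipodal

lemma Infinite.exists_injective_not_surjective_iterate_injective (ι : Type*) [Infinite ι] :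
    ∃ g : ι → ι, Injective g ∧ ¬ Surjective g ∧ ∀ i, Injective fun n => g^[n] i := by
  obtain ⟨e⟩ : Nonempty (ℕ × ι ≃ ι) := Cardinal.eq.1 (by simp)
  set σ : ℕ × ι → ℕ × ι := Prod.map Nat.succ id
  have hσ : ∀ n p, σ^[n] p = (p.1 + n, p.2) := by
    intro n p
    rw [Prod.map_iterate, iterate_id]
    exact Prod.ext (Nat.succ_iterate _ _) rfl
  have hconj : Semiconj e σ (e ∘ σ ∘ e.symm) := fun p => by simp
  refine ⟨e ∘ σ ∘ e.symm, ?_, fun hsurj => ?_, fun i => ?_⟩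
  · exact e.injective.comp
      ((Prod.map_injective.2 ⟨Nat.succ_injective, injective_id⟩).comp e.symm.injective)
  · obtain ⟨i, hi⟩ := hsurj (e (0, Classical.arbitrary ι))
    simpa [σ] using congrArg Prod.fst (e.injective hi)
  · obtain ⟨p, rfl⟩ := e.surjective i
    intro m n hmn
    simpa [← (hconj.iterate_right _).eq, hσ] using hmn

namespace HilbertBasis

variable {ι 𝕜 E : Type*} [RCLike 𝕜] [NormedAddCommGroup E] [InnerProductSpace 𝕜 E]

lemma infinite_of_not_finiteDimensional (b : HilbertBasis ι 𝕜 E)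
    (h : ¬ FiniteDimensional 𝕜 E) : Infinite ι := by
  by_contra hfin
  have := not_infinite_iff_finite.mp hfin
  have := Fintype.ofFinite ι
  exact h (Module.Finite.of_basis b.toOrthonormalBasis.toBasis)

variable (b : HilbertBasis ι 𝕜 E)

lemma eq_zero_of_forall_inner_eq_zero {x : E} (h : ∀ i, ⟪b i, x⟫_𝕜 = 0) : x = 0 :=
  (b.hasSum_repr x).unique (by simp [b.repr_apply_apply, h, hasSum_zero])

lemma exists_linearIsometry_apply_eq [CompleteSpace E] {g : ι → ι} (hg : Injective g) :
    ∃ S : E →ₗᵢ[𝕜] E, ∀ i, S (b i) = b (g i) := by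
  classical
  refine ⟨((b.orthonormal.comp g hg).orthogonalFamily.linearIsometry).comp
    b.repr.toLinearIsometry, fun i => ?_⟩
  simp [b.repr_self]

variable {b} {S : E →ₗᵢ[𝕜] E} {g : ι → ι}

lemma linearIsometry_apply_ne_of_notMem_range (hS : ∀ i, S (b i) = b (g i)) {j : ι}
    (hj : j ∉ Set.range g) (x : E) : S x ≠ b j := by
  intro hx
  have hx0 : x = 0 := b.eq_zero_of_forall_inner_eq_zero fun i => by
    rw [← S.inner_map_map, hS, hx]
    exact b.orthonormal.2 fun h => hj ⟨i, h⟩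
  simpa [hx0, b.orthonormal.1 j] using congrArg norm hx

/-- Along each orbit of `g` the coefficients of an eigenvector have constant modulus, which
Bessel's inequality forces to vanish. -/
lemma eq_zero_of_linearIsometry_apply_eq_smul (hS : ∀ i, S (b i) = b (g i))
    (hg : ∀ i, Injective fun n => g^[n] i) {μ : 𝕜} {x : E} (hx : S x = μ • x) : x = 0 := by
  by_contra hx0
  have hμ : ‖μ‖ = 1 := by
    have := congrArg norm hx
    rw [S.norm_map, norm_smul] at this
    exact (mul_eq_right₀ (norm_ne_zero_iff.mpr hx0)).mp this.symm
  refine hx0 (b.eq_zero_of_forall_inner_eq_zero fun i => ?_)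
  set c : ℕ → 𝕜 := fun n => ⟪b (g^[n] i), x⟫_𝕜
  have hc : ∀ n, ‖c n‖ = ‖c 0‖ := by
    intro n
    induction n with
    | zero => rfl
    | succ n ih =>
      have : c n = μ * c (n + 1) := by
        calc c n = ⟪S (b (g^[n] i)), S x⟫_𝕜 := (S.inner_map_map _ _).symm
          _ = μ * c (n + 1) := by rw [hx, inner_smul_right, hS, ← iterate_succ_apply' g]
      rw [← ih, this, norm_mul, hμ, one_mul]
  have hlim := ((b.orthonormal.comp _ (hg i)).inner_products_summable x).tendsto_atTop_zero
  have hconst : (fun n => ‖c n‖ ^ 2) = fun _ => ‖c 0‖ ^ 2 := funext fun n => by rw [hc n]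
  have : ‖c 0‖ ^ 2 = 0 := tendsto_nhds_unique tendsto_const_nhds (hconst ▸ hlim)
  simpa [c] using this

end HilbertBasis

/-- The unit sphere of an infinite-dimensional complex Hilbert space (such as
`ℓ²(ℕ, ℂ)`) is contractible. -/
theorem contractible_sphere_of_infinite_dimensional_hilbert
    (E : Type*) [NormedAddCommGroup E] [InnerProductSpace ℂ E] [CompleteSpace E]
    (h : ¬ FiniteDimensional ℂ E) :
    ContractibleSpace (Metric.sphere (0 : E) 1) := by
  obtain ⟨w, b, -⟩ := exists_hilbertBasis ℂ E
  have := b.infinite_of_not_finiteDimensional h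
  obtain ⟨g, hg, hg_surj, hg_orbit⟩ :=
    Infinite.exists_injective_not_surjective_iterate_injective w
  obtain ⟨j, hj⟩ := not_forall.mp hg_surj
  obtain ⟨S, hS⟩ := b.exists_linearIsometry_apply_eq hg
  let T : C(sphere (0 : E) 1, sphere (0 : E) 1) := ⟨fun x => ⟨S x, by simp⟩, by fun_prop⟩
  rw [contractible_iff_id_nullhomotopic]
  refine ⟨⟨b j, by simp [b.orthonormal.1 j]⟩,
    (homotopic_of_forall_ne_neg _ T fun x hx => ?_).trans
      (homotopic_of_forall_ne_neg T _ fun x hx => ?_)⟩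
  · have := HilbertBasis.eq_zero_of_linearIsometry_apply_eq_smul hS hg_orbit (μ := -1)
      (by simpa [T] using hx)
    simpa [this] using x.2
  · exact HilbertBasis.linearIsometry_apply_ne_of_notMem_range hS hj (-x)
      (by rw [map_neg]; exact hx.symm)
end
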